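/- Every symmetric positive definite matrix Y with Tr(Y) = 1 can be written as Y = exp(V)/Tr(exp(V)) for some symmetric matrix V; moreover, for a fixed Ȳ = exp(V̄)/Tr(exp(V̄)) and ζ ∈ Sⁿ, the minimizer of Ent(W) + Tr(W·(ζ − Ent'(Ȳ))) over the spectahedron Δₙᴹ is H(V̄ − ζ) := exp(V̄ − ζ)/Tr(exp(V̄ − ζ)). -/

import Mathlib

open Matrix

/-- Matrix entropy of a symmetric matrix via eigenvalues (junk value `0` otherwise). -/
noncomputable def matEnt {n : ℕ} (Y : Matrix (Fin n) (Fin n) ℝ) : ℝ :=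
  if h : Y.IsHermitian then ∑ i, h.eigenvalues i * Real.log (h.eigenvalues i) else 0

/-- The map `H(V) = exp(V) / Tr(exp V)`. -/
noncomputable def matH {n : ℕ} (V : Matrix (Fin n) (Fin n) ℝ) : Matrix (Fin n) (Fin n) ℝ :=
  ((NormedSpace.exp V).trace)⁻¹ • NormedSpace.exp V

/-!
Part (i) is `V = log Y`. Part (ii) is the Gibbs variational principle for `A = V̄ - ζ`: on
trace-one matrices the objective differs from `Ent(W) - Tr(W A)` by a constant, and
`Ent(W) - Tr(W A) ≥ -log Tr(exp A)` with equality at `W = H(A)`.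
For the inequality write `W = U diag(ν) Uᵀ` and `B = Uᵀ A U`, so that `Tr(W A) = ∑ νᵢ Bᵢᵢ`.
The scalar Gibbs inequality bounds `∑ νᵢ Bᵢᵢ - ∑ νᵢ log νᵢ` by `log ∑ exp Bᵢᵢ`, and Jensen's
inequality in the eigenbasis of `B` gives `exp Bᵢᵢ ≤ (exp B)ᵢᵢ` (Peierls), whence
`∑ exp Bᵢᵢ ≤ Tr(exp B) = Tr(exp A)`. The equality case is a computation in the functional
calculus of `A`, since `H(A) = cfc (exp · / Tr(exp A)) A`.
-/

open Real

namespace Real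

theorem mul_sub_log_le_exp_sub {ν : ℝ} (hν : 0 ≤ ν) (b : ℝ) : ν * (b - log ν) ≤ exp b - ν := by
  rcases hν.eq_or_lt with rfl | hν
  · simpa using (exp_pos b).le
  · have h := mul_le_mul_of_nonneg_left (add_one_le_exp (b - log ν)) hν.le
    rw [exp_sub, exp_log hν, mul_div_cancel₀ _ hν.ne'] at h
    linarith

theorem sum_mul_sub_log_le_log_sum_exp {ι : Type*} [Fintype ι] {ν : ι → ℝ} (hν : ∀ i, 0 ≤ ν i)
    (hν1 : ∑ i, ν i = 1) (a : ι → ℝ) :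
    ∑ i, ν i * (a i - log (ν i)) ≤ log (∑ i, exp (a i)) := by
  set S := ∑ i, exp (a i)
  have : Nonempty ι := by
    by_contra h
    simp [not_nonempty_iff.mp h] at hν1
  have hS : 0 < S := Finset.sum_pos (fun i _ => exp_pos _) Finset.univ_nonempty
  have key := Finset.sum_le_sum fun i (_ : i ∈ Finset.univ) =>
    mul_sub_log_le_exp_sub (hν i) (a i - log S)
  have hexp : ∑ i, exp (a i - log S) = 1 := by
    simp_rw [exp_sub, exp_log hS, ← Finset.sum_div]
    exact div_self hS.ne'
  have hshift : ∑ i, ν i * (a i - log S - log (ν i)) = ∑ i, ν i * (a i - log (ν i)) - log S := by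
    simp only [sub_right_comm _ (log S), mul_sub, Finset.sum_sub_distrib, ← Finset.sum_mul, hν1,
      one_mul]
  rw [Finset.sum_sub_distrib, hexp, hν1, hshift] at key
  linarith

end Real

namespace Matrix

variable {ι 𝕜 : Type*} [Fintype ι] [DecidableEq ι] [RCLike 𝕜]

theorem trace_exp_unitary_conj (U : unitary (Matrix ι ι 𝕜)) (A : Matrix ι ι 𝕜) :
    (NormedSpace.exp (star (U : Matrix ι ι 𝕜) * A * U)).trace = (NormedSpace.exp A).trace := by
  rw [← inv_eq_left_inv (Unitary.coe_star_mul_self U), exp_conj' _ _ Unitary.isUnit_coe,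
    trace_mul_cycle, inv_eq_left_inv (Unitary.coe_star_mul_self U),
    Unitary.mul_star_self_of_mem U.2, one_mul]

namespace IsHermitian

theorem trace_cfc {A : Matrix ι ι 𝕜} (hA : A.IsHermitian) (f : ℝ → ℝ) :
    (cfc f A).trace = ∑ i, (f (hA.eigenvalues i) : 𝕜) := by
  rw [hA.cfc_eq, IsHermitian.cfc, Unitary.conjStarAlgAut_apply, trace_mul_cycle,
    Unitary.coe_star_mul_self, one_mul, trace_diagonal]
  rfl

theorem trace_mul_eq_sum_eigenvalues_mul {A B : Matrix ι ι 𝕜} (hA : A.IsHermitian) :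
    (A * B).trace = ∑ i, (hA.eigenvalues i : 𝕜) *
      (star (hA.eigenvectorUnitary : Matrix ι ι 𝕜) * B * hA.eigenvectorUnitary) i i := by
  conv_lhs => rw [hA.spectral_theorem, Unitary.conjStarAlgAut_apply]
  rw [mul_assoc, mul_assoc, trace_mul_comm, mul_assoc]
  simp only [trace, diag_apply, diagonal_mul, Function.comp_apply]

variable {A : Matrix ι ι ℝ}

theorem cfc_apply_self (hA : A.IsHermitian) (f : ℝ → ℝ) (i : ι) :
    cfc f A i i =
      ∑ j, (hA.eigenvectorUnitary : Matrix ι ι ℝ) i j ^ 2 * f (hA.eigenvalues j) := by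
  rw [hA.cfc_eq, IsHermitian.cfc, Unitary.conjStarAlgAut_apply, mul_apply]
  refine Finset.sum_congr rfl fun j _ => ?_
  simp only [mul_diagonal, star_apply, star_trivial, Function.comp_apply, RCLike.ofReal_real_eq_id,
    id_eq]
  ring

theorem sum_sq_eigenvectorUnitary (hA : A.IsHermitian) (i : ι) :
    ∑ j, (hA.eigenvectorUnitary : Matrix ι ι ℝ) i j ^ 2 = 1 := by
  have h := hA.cfc_apply_self (fun _ => 1) i
  rw [cfc_const_one ℝ A hA.isSelfAdjoint, one_apply_eq] at h
  simpa using h.symm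

theorem _root_.ConvexOn.map_diag_le_diag_cfc {f : ℝ → ℝ} (hf : ConvexOn ℝ Set.univ f)
    (hA : A.IsHermitian) (i : ι) : f (A i i) ≤ cfc f A i i := by
  have hdiag := hA.cfc_apply_self id i
  rw [cfc_id ℝ A hA.isSelfAdjoint] at hdiag
  rw [hdiag, hA.cfc_apply_self]
  simpa using hf.map_sum_le (fun j _ => sq_nonneg _) (hA.sum_sq_eigenvectorUnitary i)
    (fun j _ => Set.mem_univ _)

theorem cfc_exp_eq_exp (hA : A.IsHermitian) : cfc Real.exp A = NormedSpace.exp A := by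
  open scoped Matrix.Norms.L2Operator in
  exact CFC.real_exp_eq_normedSpace_exp hA.isSelfAdjoint

theorem trace_exp (hA : A.IsHermitian) :
    (NormedSpace.exp A).trace = ∑ i, Real.exp (hA.eigenvalues i) := by
  rw [← hA.cfc_exp_eq_exp, hA.trace_cfc]
  rfl

theorem trace_exp_pos [Nonempty ι] (hA : A.IsHermitian) : 0 < (NormedSpace.exp A).trace := by
  rw [hA.trace_exp]
  exact Finset.sum_pos (fun i _ => Real.exp_pos _) Finset.univ_nonempty

theorem sum_exp_diag_le_trace_exp (hA : A.IsHermitian) :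
    ∑ i, Real.exp (A i i) ≤ (NormedSpace.exp A).trace := by
  rw [← hA.cfc_exp_eq_exp, trace]
  exact Finset.sum_le_sum fun i _ => convexOn_exp.map_diag_le_diag_cfc hA i

theorem posSemidef_exp (hA : A.IsHermitian) : (NormedSpace.exp A).PosSemidef := by
  open scoped MatrixOrder in
  exact nonneg_iff_posSemidef.mp (hA.cfc_exp_eq_exp ▸ cfc_nonneg fun x _ => (exp_pos x).le)

section Spectahedron

variable {n : ℕ} {A : Matrix (Fin n) (Fin n) ℝ}

theorem matEnt_eq (hA : A.IsHermitian) :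
    matEnt A = ∑ i, hA.eigenvalues i * log (hA.eigenvalues i) :=
  dif_pos hA

theorem matEnt_cfc (hA : A.IsHermitian) (f : ℝ → ℝ) :
    matEnt (cfc f A) = ∑ i, f (hA.eigenvalues i) * log (f (hA.eigenvalues i)) := by
  have hB : (cfc f A).IsHermitian := cfc_predicate f A
  calc matEnt (cfc f A) = (cfc (fun x => x * log x) (cfc f A)).trace := by
        rw [hB.matEnt_eq, hB.trace_cfc]
        rfl
    _ = (cfc ((fun x => x * log x) ∘ f) A).trace := by
        rw [cfc_comp _ _ A hA.isSelfAdjoint continuous_mul_log.continuousOn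
          (finite_real_spectrum.continuousOn f)]
    _ = _ := by
        rw [hA.trace_cfc]
        rfl

theorem matH_eq_cfc (hA : A.IsHermitian) :
    matH A = cfc (fun x => ((NormedSpace.exp A).trace)⁻¹ * Real.exp x) A := by
  rw [cfc_const_mul _ _ A, hA.cfc_exp_eq_exp, matH]

theorem posSemidef_matH (hA : A.IsHermitian) : (matH A).PosSemidef :=
  hA.posSemidef_exp.smul <| inv_nonneg.mpr <|
    hA.trace_exp ▸ Finset.sum_nonneg fun _ _ => (Real.exp_pos _).le

theorem trace_matH [NeZero n] (hA : A.IsHermitian) : (matH A).trace = 1 := by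
  rw [matH, trace_smul, smul_eq_mul, inv_mul_cancel₀ hA.trace_exp_pos.ne']

theorem matEnt_matH_sub_trace_mul_self [NeZero n] (hA : A.IsHermitian) :
    matEnt (matH A) - (matH A * A).trace = -log (NormedSpace.exp A).trace := by
  set Z := (NormedSpace.exp A).trace
  have hZ : 0 < Z := hA.trace_exp_pos
  have hsum : ∑ i, Z⁻¹ * Real.exp (hA.eigenvalues i) = 1 := by
    rw [← Finset.mul_sum, ← hA.trace_exp, inv_mul_cancel₀ hZ.ne']
  have hent : matEnt (matH A) =
      ∑ i, Z⁻¹ * Real.exp (hA.eigenvalues i) * (hA.eigenvalues i - log Z) := by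
    rw [hA.matH_eq_cfc, hA.matEnt_cfc]
    refine Finset.sum_congr rfl fun i _ => ?_
    rw [log_mul (inv_ne_zero hZ.ne') (Real.exp_pos _).ne', log_inv, Real.log_exp]
    ring
  have htr : (matH A * A).trace = ∑ i, Z⁻¹ * Real.exp (hA.eigenvalues i) * hA.eigenvalues i := by
    rw [hA.matH_eq_cfc]
    conv_lhs => arg 1; arg 2; rw [← cfc_id' ℝ A]
    rw [← cfc_mul _ _ A, hA.trace_cfc]
    rfl
  rw [hent, htr, ← Finset.sum_sub_distrib]
  simp only [mul_sub, sub_sub_cancel_left, Finset.sum_neg_distrib, ← Finset.sum_mul, hsum, one_mul]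

theorem neg_log_trace_exp_le_matEnt_sub_trace_mul [NeZero n] (hA : A.IsHermitian)
    {W : Matrix (Fin n) (Fin n) ℝ} (hW : W.PosSemidef) (hW1 : W.trace = 1) :
    -log (NormedSpace.exp A).trace ≤ matEnt W - (W * A).trace := by
  set U := hW.1.eigenvectorUnitary
  set B := star (U : Matrix (Fin n) (Fin n) ℝ) * A * U
  have hν1 : ∑ i, hW.1.eigenvalues i = 1 := by
    rw [← hW1, hW.1.trace_eq_sum_eigenvalues]
    rfl
  have hB : B.IsHermitian := isHermitian_conjTranspose_mul_mul _ hA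
  have hgibbs := sum_mul_sub_log_le_log_sum_exp hW.eigenvalues_nonneg hν1 fun i => B i i
  have hpeierls := log_le_log (Finset.sum_pos (fun i _ => Real.exp_pos _) Finset.univ_nonempty)
    hB.sum_exp_diag_le_trace_exp
  rw [trace_exp_unitary_conj] at hpeierls
  rw [hW.1.matEnt_eq, hW.1.trace_mul_eq_sum_eigenvalues_mul]
  simp only [mul_sub, Finset.sum_sub_distrib] at hgibbs
  change -log _ ≤ _ - ∑ i, hW.1.eigenvalues i * B i i
  linarith

end Spectahedron

end IsHermitian

theorem PosDef.exists_isHermitian_eq_matH {n : ℕ} {Y : Matrix (Fin n) (Fin n) ℝ}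
    (hY : Y.PosDef) (hY1 : Y.trace = 1) :
    ∃ V : Matrix (Fin n) (Fin n) ℝ, V.IsHermitian ∧ Y = matH V := by
  open scoped MatrixOrder Matrix.Norms.L2Operator in
  refine ⟨CFC.log Y, IsSelfAdjoint.log.isHermitian, ?_⟩
  rw [matH, CFC.exp_log Y hY.isStrictlyPositive, hY1, inv_one, one_smul]

end Matrix

/-- (i) Every symmetric positive definite matrix of trace 1 is of the form
`exp(V)/Tr(exp V)` for some symmetric `V`; (ii) for `Ȳ = H(V̄)` and symmetric `ζ`,
the minimizer over the spectahedron of `W ↦ Ent(W) + Tr(W (ζ − Ent'(Ȳ)))` is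
`H(V̄ − ζ)`, where `Ent'(Ȳ) = ln Ȳ + Iₙ = V̄ + (1 − ln Tr(exp V̄)) Iₙ`. -/
theorem spectahedron_entropy_prox {n : ℕ} (hn : 0 < n) :
    (∀ Y : Matrix (Fin n) (Fin n) ℝ, Y.PosDef → Y.trace = 1 →
      ∃ V : Matrix (Fin n) (Fin n) ℝ, V.IsHermitian ∧ Y = matH V) ∧
    (∀ (Vbar ζ : Matrix (Fin n) (Fin n) ℝ), Vbar.IsHermitian → ζ.IsHermitian →
      -- Ent'(Ȳ) for Ȳ = H(V̄):
      ∀ EntGrad : Matrix (Fin n) (Fin n) ℝ,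
        EntGrad = Vbar + (1 - Real.log ((NormedSpace.exp Vbar).trace)) • (1 : Matrix (Fin n) (Fin n) ℝ) →
      matH (Vbar - ζ) ∈ {Y : Matrix (Fin n) (Fin n) ℝ | Y.PosSemidef ∧ Y.trace = 1} ∧
      ∀ W ∈ {Y : Matrix (Fin n) (Fin n) ℝ | Y.PosSemidef ∧ Y.trace = 1},
        matEnt (matH (Vbar - ζ)) + ((matH (Vbar - ζ)) * (ζ - EntGrad)).trace ≤
          matEnt W + (W * (ζ - EntGrad)).trace) := by
  have : NeZero n := ⟨hn.ne'⟩
  refine ⟨fun Y hY hY1 => hY.exists_isHermitian_eq_matH hY1, ?_⟩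
  intro Vbar ζ hVbar hζ EntGrad hEntGrad
  have hA : (Vbar - ζ).IsHermitian := hVbar.sub hζ
  set c := 1 - log (NormedSpace.exp Vbar).trace
  have hlin : ∀ X : Matrix (Fin n) (Fin n) ℝ, X.trace = 1 →
      (X * (ζ - EntGrad)).trace = -(X * (Vbar - ζ)).trace - c := by
    intro X hX
    rw [hEntGrad, show ζ - (Vbar + c • 1) = -(Vbar - ζ) - c • 1 by abel, mul_sub, mul_neg,
      mul_smul_comm, mul_one, trace_sub, trace_neg, trace_smul, hX, smul_eq_mul, mul_one]
  refine ⟨⟨hA.posSemidef_matH, hA.trace_matH⟩, fun W ⟨hW, hW1⟩ => ?_⟩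
  have hmin := hA.matEnt_matH_sub_trace_mul_self
  have hle := hA.neg_log_trace_exp_le_matEnt_sub_trace_mul hW hW1
  rw [hlin _ hA.trace_matH, hlin W hW1]
  linarith
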